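/- arXiv:2504.21010 — 2 statements merged into one kernel-verified Lean document; each statement's English description precedes it below -/
import Mathlib

section
/- Let G be a finite abelian group of order n with identity e, and for each character χ of G set y_χ := Σ_{g∈G} χ(g) x_g. Then a polynomial f ∈ ℂ[x_g : g ∈ G] satisfies D_g f = 0 for all g ∈ G∖{e} if and only if f is a polynomial in the group determinant Θ_G(x_g) = Π_{χ∈Ĝ} y_χ. -/
open MvPolynomial

/-- The Frobenius differential operator `D_g f = ∑_{h ∈ G} x_{g⁻¹ h} ∂f/∂x_h`. -/
noncomputable def Dop {G : Type*} [CommGroup G] [Fintype G] (g : G)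
    (f : MvPolynomial G ℂ) : MvPolynomial G ℂ :=
  ∑ h : G, X (g⁻¹ * h) * pderiv h f

/-- The group determinant `Θ_G = det (x_{g h⁻¹})_{g,h ∈ G}`. -/
noncomputable def groupDet (G : Type*) [CommGroup G] [Fintype G] [DecidableEq G] :
    MvPolynomial G ℂ :=
  Matrix.det (Matrix.of fun g h : G => (X (g * h⁻¹) : MvPolynomial G ℂ))

/-!
The characters of `G` give a linear change of variables `x ↦ y`, invertible by orthogonality.
Each `D_g` is a derivation with `D_g y_χ = χ(g) y_χ`, so it acts on the monomial `∏ y_χ ^ a_χ` by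
the scalar `∑_χ a_χ χ(g)`. Since the character table is invertible and `∑_χ χ(g) = 0` for
`g ≠ 1`, these scalars vanish for all `g ≠ 1` exactly when `a` is constant, i.e. when the
monomial is a power of `∏_χ y_χ`. Finally `∏_χ y_χ = Θ_G`, because the characters are common
left eigenvectors of the matrix `(x_{g h⁻¹})`.
-/

namespace Derivation

variable {R A : Type*} [CommSemiring R] [CommSemiring A] [Algebra R A] (D : Derivation R A A)

theorem apply_pow_of_eigen {x c : A} (h : D x = c * x) (n : ℕ) :
    D (x ^ n) = n * c * x ^ n := by
  cases n with
  | zero => simp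
  | succ n => rw [leibniz_pow, h, smul_eq_mul, nsmul_eq_mul, Nat.add_sub_cancel, pow_succ]; ring

theorem apply_prod_of_eigen {ι : Type*} (s : Finset ι) {x c : ι → A}
    (h : ∀ i ∈ s, D (x i) = c i * x i) :
    D (∏ i ∈ s, x i) = (∑ i ∈ s, c i) * ∏ i ∈ s, x i := by
  classical
  induction s using Finset.induction_on with
  | empty => simp
  | insert i s hi ih =>
    rw [Finset.prod_insert hi, Finset.sum_insert hi, leibniz, smul_eq_mul, smul_eq_mul,
      ih fun j hj => h j (Finset.mem_insert_of_mem hj), h i (Finset.mem_insert_self i s)]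
    ring

theorem apply_aeval_monomial_of_eigen {σ : Type*} {x c : σ → A} (h : ∀ i, D (x i) = c i * x i)
    (a : σ →₀ ℕ) (r : R) :
    D (aeval x (monomial a r)) = (a.sum fun i k => k * c i) * aeval x (monomial a r) := by
  rw [aeval_monomial, leibniz, map_algebraMap, smul_zero, add_zero, smul_eq_mul, Finsupp.prod,
    apply_prod_of_eigen D _ fun i _ => apply_pow_of_eigen D (h i) (a i), Finsupp.sum]
  ring

end Derivation

namespace MvPolynomial

variable {R ι κ μ : Type*} [CommSemiring R] [Fintype κ]

noncomputable def linearSubst (A : Matrix ι κ R) : MvPolynomial ι R →ₐ[R] MvPolynomial κ R :=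
  aeval fun i => ∑ j, C (A i j) * X j

@[simp] theorem linearSubst_X (A : Matrix ι κ R) (i : ι) :
    linearSubst A (X i) = ∑ j, C (A i j) * X j :=
  aeval_X _ _

theorem linearSubst_comp_linearSubst [Fintype μ] (A : Matrix ι κ R) (B : Matrix κ μ R) :
    (linearSubst B).comp (linearSubst A) = linearSubst (A * B) := by
  refine algHom_ext fun i => ?_
  simp only [AlgHom.comp_apply, linearSubst_X, map_sum, map_mul, Matrix.mul_apply,
    Finset.mul_sum, Finset.sum_mul, algHom_C, algebraMap_eq, mul_assoc]
  exact Finset.sum_comm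

theorem linearSubst_one [DecidableEq κ] : linearSubst (1 : Matrix κ κ R) = AlgHom.id R _ := by
  refine algHom_ext fun i => ?_
  simp [Matrix.one_apply]

noncomputable def linearSubstEquiv [Fintype ι] [DecidableEq ι] [DecidableEq κ]
    (A : Matrix ι κ R) (B : Matrix κ ι R) (hAB : A * B = 1) (hBA : B * A = 1) :
    MvPolynomial ι R ≃ₐ[R] MvPolynomial κ R :=
  AlgEquiv.ofAlgHom (linearSubst A) (linearSubst B)
    (by rw [linearSubst_comp_linearSubst, hBA, linearSubst_one])
    (by rw [linearSubst_comp_linearSubst, hAB, linearSubst_one])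

theorem mem_adjoin_monomial_iff (s : ι →₀ ℕ) (p : MvPolynomial ι R) :
    p ∈ Algebra.adjoin R {monomial s 1} ↔ ↑p.support ⊆ Set.range fun n : ℕ => n • s := by
  rw [← Subalgebra.mem_toSubmodule, Algebra.adjoin_eq_span, ← Submonoid.powers_eq_closure,
    ← mem_restrictSupport_iff, restrictSupport_eq_span, ← Set.range_comp]
  congr!
  ext x
  simp [Submonoid.mem_powers_iff, monomial_pow]

theorem sum_monomial_eq_zero_iff {s : Finset (ι →₀ ℕ)} {c : (ι →₀ ℕ) → R} :
    ∑ a ∈ s, monomial a (c a) = 0 ↔ ∀ a ∈ s, c a = 0 := by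
  classical
  refine ⟨fun h a ha => ?_, fun h => Finset.sum_eq_zero fun a ha => by rw [h a ha, monomial_zero]⟩
  simpa only [coeff_sum, coeff_monomial, Finset.sum_ite_eq', if_pos ha, coeff_zero] using
    congr_arg (coeff a) h

theorem mem_adjoin_prod_X_iff [Fintype ι] (p : MvPolynomial ι R) :
    p ∈ Algebra.adjoin R {∏ i, X i} ↔ ∀ a ∈ p.support, ∃ n : ℕ, ∀ i, a i = n := by
  rw [show (∏ i, X i : MvPolynomial ι R) = monomial (∑ i, Finsupp.single i 1) 1 by
    rw [monomial_sum_one]; rfl, mem_adjoin_monomial_iff]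
  refine forall₂_congr fun a _ => exists_congr fun n => ?_
  simp [Finsupp.ext_iff, eq_comm]

end MvPolynomial

section Characters

variable {G : Type*} [CommGroup G] [Fintype G]

noncomputable instance : Fintype (G →* ℂˣ) := Fintype.ofFinite _

theorem card_monoidHom_units_complex : Fintype.card (G →* ℂˣ) = Fintype.card G :=
  Fintype.card_congr (CommGroup.monoidHom_mulEquiv_of_hasEnoughRootsOfUnity G ℂ).some.toEquiv

theorem sum_char_mul_inv_char [DecidableEq (G →* ℂˣ)] (χ ψ : G →* ℂˣ) :
    ∑ g, (χ g * (ψ g)⁻¹ : ℂ) = if χ = ψ then (Fintype.card G : ℂ) else 0 := by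
  have hcoe : (Units.coeHom ℂ).comp (χ * ψ⁻¹) = 1 ↔ χ = ψ := by
    rw [← mul_inv_eq_one (a := χ), ← (Units.coeHom ℂ).comp_one,
      MonoidHom.cancel_left (g := Units.coeHom ℂ) Units.val_injective]
  simpa [hcoe, apply_ite] using sum_hom_units ((Units.coeHom ℂ).comp (χ * ψ⁻¹))

theorem sum_char_apply_eq_zero {g : G} (hg : g ≠ 1) : ∑ χ : G →* ℂˣ, (χ g : ℂ) = 0 := by
  refine sum_hom_units_eq_zero ((Units.coeHom ℂ).comp (MonoidHom.eval g)) fun h => ?_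
  obtain ⟨χ, hχ⟩ := CommGroup.exists_apply_ne_one_of_hasEnoughRootsOfUnity G ℂ hg
  exact hχ (Units.ext (DFunLike.congr_fun h χ))

variable (G) in
def charTable : Matrix (G →* ℂˣ) G ℂ :=
  Matrix.of fun χ g => χ g

variable (G) in
noncomputable def charTableInv : Matrix G (G →* ℂˣ) ℂ :=
  Matrix.of fun g ψ => (Fintype.card G : ℂ)⁻¹ * (ψ g)⁻¹

theorem charTable_mul_charTableInv [DecidableEq (G →* ℂˣ)] :
    charTable G * charTableInv G = 1 := by
  ext χ ψ
  simp only [Matrix.mul_apply, charTable, charTableInv, Matrix.of_apply, mul_left_comm _ _⁻¹,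
    ← Finset.mul_sum]
  rw [sum_char_mul_inv_char, Matrix.one_apply]
  split_ifs <;> simp

theorem charTableInv_mul_charTable [DecidableEq G] : charTableInv G * charTable G = 1 := by
  classical
  exact (Matrix.mul_eq_one_comm_of_card_eq _ _ _ card_monoidHom_units_complex).mp
    charTable_mul_charTableInv

theorem vecMul_const_charTable [DecidableEq G] (c : ℂ) :
    Matrix.vecMul (Function.const _ c) (charTable G) = Pi.single 1 (c * Fintype.card G) := by
  ext g
  simp only [Matrix.vecMul, dotProduct, charTable, Function.const_apply, Matrix.of_apply,
    ← Finset.mul_sum]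
  rcases eq_or_ne g 1 with rfl | hg
  · simp [card_monoidHom_units_complex]
  · rw [sum_char_apply_eq_zero hg, Pi.single_eq_of_ne hg, mul_zero]

theorem vecMul_charTable_injective : Function.Injective (Matrix.vecMul · (charTable G)) := by
  classical
  intro u v h
  simpa [Matrix.vecMul_vecMul, charTable_mul_charTableInv] using
    congr_arg (Matrix.vecMul · (charTableInv G)) h

theorem vecMul_charTable_eq_zero_off_one_iff (u : (G →* ℂˣ) → ℂ) :
    (∀ g ≠ 1, Matrix.vecMul u (charTable G) g = 0) ↔ ∃ c, u = Function.const _ c := by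
  classical
  refine ⟨fun h => ⟨Matrix.vecMul u (charTable G) 1 / Fintype.card G, ?_⟩, ?_⟩
  · refine vecMul_charTable_injective ?_
    dsimp only
    rw [vecMul_const_charTable, div_mul_cancel₀ _ (Nat.cast_ne_zero.mpr Fintype.card_ne_zero)]
    ext g
    rcases eq_or_ne g 1 with rfl | hg
    · simp
    · rw [h g hg, Pi.single_eq_of_ne hg]
  · rintro ⟨c, rfl⟩ g hg
    rw [vecMul_const_charTable, Pi.single_eq_of_ne hg]

theorem vecMul_natCast_charTable_eq_zero_off_one_iff (a : (G →* ℂˣ) →₀ ℕ) :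
    (∀ g ≠ 1, Matrix.vecMul (fun χ => (a χ : ℂ)) (charTable G) g = 0) ↔
      ∃ n : ℕ, ∀ χ, a χ = n := by
  rw [vecMul_charTable_eq_zero_off_one_iff]
  constructor
  · rintro ⟨c, hc⟩
    exact ⟨a 1, fun χ => by exact_mod_cast (congr_fun hc χ).trans (congr_fun hc 1).symm⟩
  · rintro ⟨n, hn⟩
    exact ⟨n, funext fun χ => by simp [hn]⟩

end Characters

section Frobenius

variable {G : Type*} [CommGroup G] [Fintype G]

variable (G) in
/-- `fourierEquiv G (X χ)` is the variable `y_χ = ∑ g, χ g • x_g`. -/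
noncomputable def fourierEquiv : MvPolynomial (G →* ℂˣ) ℂ ≃ₐ[ℂ] MvPolynomial G ℂ := by
  classical
  exact linearSubstEquiv (charTable G) (charTableInv G) charTable_mul_charTableInv
    charTableInv_mul_charTable

theorem fourierEquiv_apply (p : MvPolynomial (G →* ℂˣ) ℂ) :
    fourierEquiv G p = linearSubst (charTable G) p :=
  rfl

noncomputable def frobeniusDerivation (g : G) :
    Derivation ℂ (MvPolynomial G ℂ) (MvPolynomial G ℂ) :=
  ∑ h, (X (g⁻¹ * h) : MvPolynomial G ℂ) • pderiv h

theorem frobeniusDerivation_apply (g : G) (f : MvPolynomial G ℂ) :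
    frobeniusDerivation g f = Dop g f := by
  rw [frobeniusDerivation, ← Derivation.coeFnAddMonoidHom_apply, map_sum, Finset.sum_apply]
  simp [Dop]

theorem frobeniusDerivation_X (g h : G) : frobeniusDerivation g (X h) = X (g⁻¹ * h) := by
  classical
  simp [frobeniusDerivation_apply, Dop, pderiv_X, Pi.single_apply]

theorem frobeniusDerivation_linearSubst_X (g : G) (χ : G →* ℂˣ) :
    frobeniusDerivation g (linearSubst (charTable G) (X χ)) =
      C (χ g : ℂ) * linearSubst (charTable G) (X χ) := by
  simp only [linearSubst_X, map_sum, ← smul_eq_C_mul, Derivation.map_smul, frobeniusDerivation_X,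
    Finset.smul_sum, smul_smul]
  rw [← Equiv.sum_comp (Equiv.mulLeft g)]
  simp [charTable, mul_comm]

theorem Dop_fourierEquiv_monomial (g : G) (a : (G →* ℂˣ) →₀ ℕ) (r : ℂ) :
    Dop g (fourierEquiv G (monomial a r)) =
      fourierEquiv G (monomial a (Matrix.vecMul (fun χ => (a χ : ℂ)) (charTable G) g * r)) := by
  have h := (frobeniusDerivation g).apply_aeval_monomial_of_eigen
    (x := linearSubst (charTable G) ∘ X) (frobeniusDerivation_linearSubst_X g) a r
  rw [← aeval_unique] at h
  rw [← frobeniusDerivation_apply, fourierEquiv_apply, fourierEquiv_apply, h,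
    Finsupp.sum_fintype _ _ (by simp), ← C_mul_monomial, map_mul, algHom_C]
  simp [Matrix.vecMul, dotProduct, charTable]

theorem Dop_fourierEquiv_eq_zero_iff (g : G) (p : MvPolynomial (G →* ℂˣ) ℂ) :
    Dop g (fourierEquiv G p) = 0 ↔
      ∀ a ∈ p.support, Matrix.vecMul (fun χ => (a χ : ℂ)) (charTable G) g = 0 := by
  conv_lhs => rw [p.as_sum]
  rw [map_sum, ← frobeniusDerivation_apply, map_sum]
  simp_rw [frobeniusDerivation_apply, Dop_fourierEquiv_monomial, ← map_sum,
    map_eq_zero_iff _ (fourierEquiv G).injective, sum_monomial_eq_zero_iff]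
  exact forall₂_congr fun a ha => mul_eq_zero_iff_right (mem_support_iff.mp ha)

theorem groupDet_eq_fourierEquiv_prod_X [DecidableEq G] :
    groupDet G = fourierEquiv G (∏ χ, X χ) := by
  classical
  set V : Matrix (G →* ℂˣ) G (MvPolynomial G ℂ) := (charTable G).map C
  set W : Matrix G (G →* ℂˣ) (MvPolynomial G ℂ) := (charTableInv G).map C
  set M : Matrix G G (MvPolynomial G ℂ) := Matrix.of fun g h => X (g * h⁻¹)
  have hVW : V * W = 1 := by
    rw [← Matrix.map_mul, charTable_mul_charTableInv, Matrix.map_one _ (map_zero C) (map_one C)]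
  have hWV : W * V = 1 := by
    rw [← Matrix.map_mul, charTableInv_mul_charTable, Matrix.map_one _ (map_zero C) (map_one C)]
  have hVM : V * M = Matrix.diagonal (fun χ => fourierEquiv G (X χ)) * V := by
    refine Matrix.ext fun χ h => ?_
    rw [Matrix.diagonal_mul, Matrix.mul_apply, fourierEquiv_apply, linearSubst_X,
      ← Equiv.sum_comp (Equiv.mulRight h)]
    simp only [V, M, charTable, Matrix.map_apply, Matrix.of_apply, Equiv.coe_mulRight, map_mul,
      Units.val_mul, mul_inv_cancel_right, Finset.sum_mul]
    exact Finset.sum_congr rfl fun _ _ => by ring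
  have hM : M = W * Matrix.diagonal (fun χ => fourierEquiv G (X χ)) * V := by
    rw [Matrix.mul_assoc, ← hVM, ← Matrix.mul_assoc, hWV, Matrix.one_mul]
  change M.det = _
  rw [hM, Matrix.det_conj_of_mul_eq_one hWV hVW, Matrix.det_diagonal, map_prod]

end Frobenius

/-- For a finite abelian group, a polynomial is annihilated by every `D_g`, `g ≠ 1`,
iff it is a polynomial in the group determinant. -/
theorem invariant_ring_abelian {G : Type*} [CommGroup G] [Fintype G] [DecidableEq G]
    (f : MvPolynomial G ℂ) :
    (∀ g : G, g ≠ 1 → Dop g f = 0) ↔ f ∈ Algebra.adjoin ℂ {groupDet G} := by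
  obtain ⟨p, rfl⟩ := (fourierEquiv G).surjective f
  have hadjoin : fourierEquiv G p ∈ Algebra.adjoin ℂ {groupDet G} ↔
      p ∈ Algebra.adjoin ℂ {∏ χ, X χ} := by
    rw [groupDet_eq_fourierEquiv_prod_X, ← AlgEquiv.coe_toAlgHom, ← Set.image_singleton,
      Algebra.adjoin_image, Subalgebra.mem_map]
    simp only [AlgEquiv.coe_toAlgHom, EmbeddingLike.apply_eq_iff_eq, exists_eq_right]
  simp only [hadjoin, mem_adjoin_prod_X_iff, Dop_fourierEquiv_eq_zero_iff,
    ← vecMul_natCast_charTable_eq_zero_off_one_iff]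
  exact forall₂_comm
end

section
/- Let G be a finite abelian group, H ≤ G, T coset representatives, X coset representatives of Ĝ_H in Ĝ, and for χ ∈ X define y_{tH}^χ := Σ_{h∈H} χ(th) x_{th}. Then for any χ ∈ X and g ∈ G: D_g Θ_{G/H}(y_{tH}^χ) = 0 if and only if g ∉ H. -/
/-!
`D_g` is the derivation `∑_h x_{g⁻¹h} ∂/∂x_h`, and it maps the coset form `y_q` to
`χ(g) y_{g⁻¹q}`. By the Leibniz rule for determinants, `D_g` of the group matrix `(y_{ab⁻¹})` is
the sum over rows `a` of the determinant with row `a` replaced by `χ(g)` times row `g⁻¹a`.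
If `g ∈ H` every summand is `χ(g) det`, so `D_g det = [G : H] χ(g) det`, which is nonzero since
`det` specializes to `1` at the point `δ_1`. If `g ∉ H` every summand has two equal rows.
-/

open MvPolynomial Finset

namespace Derivation

theorem leibniz_prod {R A M : Type*} [CommSemiring R] [CommSemiring A] [AddCommMonoid M]
    [Algebra R A] [Module A M] [Module R M] (D : Derivation R A M) {ι : Type*} [DecidableEq ι]
    (s : Finset ι) (f : ι → A) :
    D (∏ i ∈ s, f i) = ∑ i ∈ s, (∏ j ∈ s.erase i, f j) • D (f i) := by
  induction s using Finset.induction_on with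
  | empty => simp
  | @insert a s ha ih =>
    have herase {i} (hi : i ∈ s) : (insert a s).erase i = insert a (s.erase i) :=
      erase_insert_of_ne fun h => ha (h ▸ hi)
    rw [prod_insert ha, D.leibniz, ih, sum_insert ha, erase_insert ha, smul_sum, add_comm]
    congr 1
    refine sum_congr rfl fun i hi => ?_
    rw [herase hi, prod_insert fun h => ha (mem_of_mem_erase h), mul_smul]

variable {R A : Type*} [CommRing R] [CommRing A] [Algebra R A] (D : Derivation R A A)
  {n : Type*} [Fintype n] [DecidableEq n]

theorem map_det (M : Matrix n n A) :
    D M.det = ∑ i, (M.updateRow i fun j => D (M i j)).det := by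
  have hterm (σ : Equiv.Perm n) (k : n) :
      (∏ j ∈ univ.erase k, M (σ j) j) • D (M (σ k) k) =
        ∏ j, (M.updateRow (σ k) fun j => D (M (σ k) j)) (σ j) j := by
    rw [← mul_prod_erase _ _ (mem_univ k), smul_eq_mul, mul_comm]
    congr 1
    · simp
    · exact prod_congr rfl fun j hj => by simp [ne_of_mem_erase hj]
  simp only [Matrix.det_apply, map_sum, map_smul_of_tower, leibniz_prod, hterm, smul_sum]
  rw [sum_comm (s := univ (α := n))]
  exact sum_congr rfl fun σ _ =>
    Equiv.sum_comp σ fun i => Equiv.Perm.sign σ • ∏ j, (M.updateRow i fun j => D (M i j)) (σ j) j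

theorem map_det_eq_card_smul (M : Matrix n n A) (c : A) (σ : n → n)
    (hM : ∀ i j, D (M i j) = c * M (σ i) j) :
    D M.det = #{i | σ i = i} • (c * M.det) := by
  have hrow (i : n) :
      (M.updateRow i fun j => D (M i j)).det = if σ i = i then c * M.det else 0 := by
    simp_rw [hM, ← smul_eq_mul, ← Pi.smul_def, Matrix.det_updateRow_smul]
    split_ifs with hi
    · rw [hi, Matrix.updateRow_eq_self, smul_eq_mul]
    · rw [Matrix.det_zero_of_row_eq hi (by simp [Matrix.updateRow_ne hi]), mul_zero]
  rw [map_det, sum_congr rfl fun i _ => hrow i, sum_ite, sum_const_zero, add_zero, sum_const]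

end Derivation

section

variable {G : Type*} [CommGroup G] [Fintype G]

noncomputable def Dop.derivation (g : G) : Derivation ℂ (MvPolynomial G ℂ) (MvPolynomial G ℂ) :=
  ∑ h : G, (X (g⁻¹ * h) : MvPolynomial G ℂ) • pderiv h

theorem Dop.derivation_apply (g : G) (f : MvPolynomial G ℂ) : Dop.derivation g f = Dop g f := by
  rw [Dop.derivation, ← Derivation.coeFnAddMonoidHom_apply, map_sum, Finset.sum_apply]
  rfl

section cosetForm

variable (H : Subgroup G) [DecidableEq (G ⧸ H)] (χ : G →* ℂˣ)

noncomputable def cosetForm (q : G ⧸ H) : MvPolynomial G ℂ :=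
  ∑ g : G, if (g : G ⧸ H) = q then C (χ g : ℂ) * X g else 0

theorem pderiv_cosetForm (h : G) (q : G ⧸ H) :
    pderiv h (cosetForm H χ q) = if (h : G ⧸ H) = q then C (χ h : ℂ) else 0 := by
  rw [cosetForm, map_sum, sum_eq_single h]
  · split_ifs <;> simp
  · intro g _ hg
    split_ifs <;> simp [pderiv_X_of_ne hg]
  · simp

theorem Dop_cosetForm (g : G) (q : G ⧸ H) :
    Dop g (cosetForm H χ q) = C (χ g : ℂ) * cosetForm H χ ((g⁻¹ : G) * q) := by
  simp only [Dop, pderiv_cosetForm]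
  rw [cosetForm, mul_sum, ← Equiv.sum_comp (Equiv.mulLeft g)]
  refine sum_congr rfl fun g' _ => ?_
  simp only [Equiv.coe_mulLeft, inv_mul_cancel_left, QuotientGroup.mk_mul, QuotientGroup.mk_inv,
    eq_inv_mul_iff_mul_eq, map_mul, Units.val_mul]
  split_ifs <;> ring

theorem eval_cosetForm [DecidableEq G] (q : G ⧸ H) :
    eval (Pi.single 1 1 : G → ℂ) (cosetForm H χ q) = if q = 1 then 1 else 0 := by
  rw [cosetForm, map_sum, sum_eq_single 1]
  · simp [apply_ite, eq_comm]
  · intro g _ hg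
    simp [apply_ite, hg]
  · simp

theorem det_cosetForm_ne_zero [Fintype (G ⧸ H)] :
    (Matrix.of fun a b : G ⧸ H => cosetForm H χ (a * b⁻¹)).det ≠ 0 := by
  classical
  intro h
  have hmap : (eval (Pi.single 1 1 : G → ℂ)).mapMatrix
      (Matrix.of fun a b : G ⧸ H => cosetForm H χ (a * b⁻¹)) = 1 := by
    ext a b
    simp [eval_cosetForm, Matrix.one_apply, mul_inv_eq_one]
  simpa [RingHom.map_det, hmap] using congrArg (eval (Pi.single 1 1 : G → ℂ)) h

end cosetForm

end

theorem Dop_quotient_groupDet_eq_zero_iff_general {G : Type*} [CommGroup G] [Fintype G]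
    (H : Subgroup G) [Fintype (G ⧸ H)] [DecidableEq (G ⧸ H)]
    (χ : G →* ℂˣ)
    (z : G ⧸ H → MvPolynomial G ℂ)
    (hz : ∀ q : G ⧸ H, z q =
      ∑ g : G, if (g : G ⧸ H) = q then C ((χ g : ℂ)) * X g else 0)
    (g : G) :
    Dop g (Matrix.det (Matrix.of fun a b : G ⧸ H => z (a * b⁻¹))) = 0 ↔ g ∉ H := by
  obtain rfl : z = cosetForm H χ := funext hz
  rw [← Dop.derivation_apply, (Dop.derivation g).map_det_eq_card_smul _ (C (χ g : ℂ))
    (fun i => ((g⁻¹ : G) : G ⧸ H) * i) fun i j => by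
      simp [Dop.derivation_apply, Dop_cosetForm, mul_assoc]]
  by_cases hg : g ∈ H
  · simp [hg, det_cosetForm_ne_zero]
  · simp [hg]

/-- For any character `χ` of a finite abelian group `G` and any subgroup `H`,
the group determinant of `G/H` evaluated at the forms `y_{tH}^χ = ∑_{h ∈ H} χ(th) x_{th}`
is annihilated by `D_g` iff `g ∉ H`. -/
theorem Dop_quotient_groupDet_eq_zero_iff {G : Type*} [CommGroup G] [Fintype G]
    [DecidableEq G] (H : Subgroup G) [Fintype (G ⧸ H)] [DecidableEq (G ⧸ H)]
    (χ : G →* ℂˣ)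
    (z : G ⧸ H → MvPolynomial G ℂ)
    (hz : ∀ q : G ⧸ H, z q =
      ∑ g : G, if (g : G ⧸ H) = q then C ((χ g : ℂ)) * X g else 0)
    (g : G) :
    Dop g (Matrix.det (Matrix.of fun a b : G ⧸ H => z (a * b⁻¹))) = 0 ↔ g ∉ H :=
  Dop_quotient_groupDet_eq_zero_iff_general H χ z hz g
end
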